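/- The language L_underfit = {(⟨A⟩, d) : A is an encodable learning algorithm and A underfits dataset d at all iterations} is undecidable. -/

import Mathlib

open Nat.Partrec (Code)

/-- Datasets: a single training example with `k-1` binary features (encoded as an
element of `Fin (2^(k-1))`) and one binary label. -/
abbrev LDataset (k : ℕ) := Fin (2 ^ (k - 1)) × Bool

/-- The model produced at iteration `i` by the encoded learning algorithm `c` on
dataset `d`: the algorithm is run (for `i` steps) on the encoded pair of the dataset
and a query feature vector, producing a binary label (defaulting to `0`, the
initial constant-zero model, while the computation has not yet converged). -/
def modelOf (k : ℕ) (c : Code) (i : ℕ) (d : LDataset k) (x : Fin (2 ^ (k - 1))) : Bool :=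
  (Nat.Partrec.Code.evaln i c (Nat.pair (Encodable.encode d) (x : ℕ))).getD 0 ≠ 0

/-- Pointwise information transfer `C_A(g,d) = log₂ (p(g|d) / p(g))` of the model
`g = A d` from the dataset `d`, for a deterministic map `A` from datasets to models
and `d` drawn uniformly from the `2^k` possible datasets: here `p(g|d) = 1` and
`p(g) = |{d' : A d' = A d}| / 2^k`. -/
noncomputable def transfer (k : ℕ)
    (A : LDataset k → (Fin (2 ^ (k - 1)) → Bool)) (d : LDataset k) : ℝ :=
  Real.logb 2 (1 / (((Finset.univ.filter fun d' : LDataset k => A d' = A d).card : ℝ) / 2 ^ k))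

/-- The algorithm encoded by `c` underfits `d` at all iterations: at every
iteration `i`, the pointwise information transfer of the produced model is
strictly less than the dataset complexity `C d`. -/
noncomputable def UnderfitsAlways (k : ℕ) (C : LDataset k → ℝ) (c : Code) (d : LDataset k) : Prop :=
  ∀ i : ℕ, transfer k (modelOf k c i) d < C d

section Aux

open Nat.Partrec.Code Encodable

/-- The target partial labels: for `n = pair (encode (f, b)) x`, output `encode b` if
`x = 0` and the indicator of `x ≤ f` otherwise. -/
private def tgt (n : ℕ) : ℕ :=
  if n.unpair.2 = 0 then n.unpair.1.unpair.2
  else if n.unpair.2 ≤ n.unpair.1.unpair.1 then 1 else 0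

private lemma tgt_primrec : Primrec tgt := by
  have h1 : Primrec fun n : ℕ => n.unpair.1 := Primrec.fst.comp Primrec.unpair
  have h2 : Primrec fun n : ℕ => n.unpair.2 := Primrec.snd.comp Primrec.unpair
  exact Primrec.ite (PrimrecRel.comp Primrec.eq h2 (Primrec.const 0))
    ((Primrec.snd.comp Primrec.unpair).comp h1)
    (Primrec.ite (PrimrecRel.comp Primrec.nat_le h2 ((Primrec.fst.comp Primrec.unpair).comp h1))
      (Primrec.const 1) (Primrec.const 0))

/-- The ideal final model, which identifies the dataset uniquely. -/
private def Amodel (k : ℕ) (d : LDataset k) (x : Fin (2 ^ (k - 1))) : Bool :=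
  tgt (Nat.pair (Encodable.encode d) (x : ℕ)) ≠ 0

private lemma tgt_pair (k : ℕ) (f : Fin (2 ^ (k - 1))) (b : Bool) (x : ℕ) :
    tgt (Nat.pair (Encodable.encode (f, b)) x) =
      if x = 0 then Encodable.encode b else if x ≤ (f : ℕ) then 1 else 0 := by
  have : Encodable.encode (f, b) = Nat.pair (f : ℕ) (Encodable.encode b) := by
    rw [Encodable.encode_prod_val]; rfl
  simp [tgt, this]

private lemma Amodel_injective (k : ℕ) (hk : 1 < k) : Function.Injective (Amodel k) := by
  have hN : 1 < 2 ^ (k - 1) := by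
    have : 1 ≤ k - 1 := by omega
    calc 1 < 2 ^ 1 := by norm_num
    _ ≤ 2 ^ (k - 1) := Nat.pow_le_pow_right (by norm_num) this
  have key : ∀ (f f' : Fin (2 ^ (k - 1))) (b b' : Bool),
      Amodel k (f, b) = Amodel k (f', b') → (f : ℕ) ≤ (f' : ℕ) := by
    intro f f' b b' h
    by_contra hlt
    push_neg at hlt
    have hx := congrFun h f
    have hf0 : (f : ℕ) ≠ 0 := by omega
    simp only [Amodel, tgt_pair, hf0, if_neg hf0, le_refl, if_pos, if_true] at hx
    rw [if_neg (by omega : ¬ (f : ℕ) ≤ (f' : ℕ))] at hx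
    simp at hx
  rintro ⟨f, b⟩ ⟨f', b'⟩ h
  have hf : f = f' := Fin.ext (le_antisymm (key f f' b b' h) (key f' f b' b h.symm))
  have hx := congrFun h (⟨0, by omega⟩ : Fin (2 ^ (k - 1)))
  have hb : b = b' := by
    simp only [Amodel, tgt_pair, if_pos rfl] at hx
    cases b <;> cases b' <;> simp_all [Encodable.encode, Encodable.encodeSum, Equiv.boolEquivPUnitSumPUnit]
  rw [hf, hb]

private lemma card_univ_LDataset (k : ℕ) (hk : 1 ≤ k) :
    (Finset.univ : Finset (LDataset k)).card = 2 ^ k := by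
  rw [Finset.card_univ]
  simp only [LDataset, Fintype.card_prod, Fintype.card_fin, Fintype.card_bool]
  rw [← pow_succ]
  congr 1
  omega

private lemma transfer_const (k : ℕ) (hk : 1 ≤ k)
    (A : LDataset k → (Fin (2 ^ (k - 1)) → Bool)) (d : LDataset k)
    (h : ∀ d', A d' = A d) : transfer k A d = 0 := by
  have hcard : (Finset.univ.filter fun d' : LDataset k => A d' = A d) = Finset.univ :=
    Finset.filter_true_of_mem fun d' _ => h d'
  rw [transfer, hcard, card_univ_LDataset k hk]
  push_cast
  rw [div_self (by positivity), div_one, Real.logb_one]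

private lemma transfer_inj (k : ℕ)
    (A : LDataset k → (Fin (2 ^ (k - 1)) → Bool)) (d : LDataset k)
    (h : Function.Injective A) : transfer k A d = k := by
  have hcard : (Finset.univ.filter fun d' : LDataset k => A d' = A d) = {d} := by
    ext d'
    simp [h.eq_iff]
  rw [transfer, hcard, Finset.card_singleton, Nat.cast_one, one_div_one_div,
    Real.logb_pow, Real.logb_self_eq_one (by norm_num), mul_one]

end Aux

/-- The language
`L_underfit = {(⟨A⟩, d) : A an encodable learning algorithm that underfits d at all iterations}`
is undecidable. Here `C d` is the dataset complexity, which satisfies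
`0 < C d ≤ C'_d = k` for each of the `2^k` single-example datasets. -/
theorem underfitting_undecidable (k : ℕ) (hk : 1 < k)
    (C : LDataset k → ℝ) (hC : ∀ d, 0 < C d ∧ C d ≤ k) :
    ¬ ComputablePred (fun p : Code × LDataset k => UnderfitsAlways k C p.1 p.2) := by
  intro hP
  -- a code computing `fun m => tgt m.unpair.2`
  obtain ⟨T, hT⟩ : ∃ T : Code, Nat.Partrec.Code.eval T = fun m : ℕ => Part.some (tgt m.unpair.2) :=
    Nat.Partrec.Code.exists_code.1 <| Partrec.nat_iff.1 <|
      (tgt_primrec.comp (Primrec.snd.comp Primrec.unpair)).to_comp.partrec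
  -- the reduction from the halting problem
  set cOf : Code → Code := fun e =>
    T.comp (Nat.Partrec.Code.pair (e.comp (Nat.Partrec.Code.const 0)) Nat.Partrec.Code.id)
    with hcOf
  set d₀ : LDataset k := (⟨0, by positivity⟩, false) with hd₀
  -- evaluation of the reduction code
  have heval : ∀ e : Code, ∀ v ∈ Nat.Partrec.Code.eval e 0, ∀ n : ℕ,
      Nat.Partrec.Code.eval (cOf e) n = Part.some (tgt n) := by
    intro e v hv n
    have he0 : Nat.Partrec.Code.eval e 0 = Part.some v := Part.eq_some_iff.2 hv
    simp [hcOf, Nat.Partrec.Code.eval, he0, Seq.seq, hT, Part.bind_eq_bind,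
      show (pure 0 : ℕ →. ℕ) n = Part.some 0 from rfl,
      show (Part.some 0 >>= Nat.Partrec.Code.eval e) = Nat.Partrec.Code.eval e 0 from Part.bind_some 0 _]
  have hevalnone : ∀ e : Code, ¬ (Nat.Partrec.Code.eval e 0).Dom → ∀ n : ℕ,
      Nat.Partrec.Code.eval (cOf e) n = Part.none := by
    intro e he n
    have he0 : Nat.Partrec.Code.eval e 0 = Part.none := Part.eq_none_iff'.2 he
    simp [hcOf, Nat.Partrec.Code.eval, he0, Seq.seq, hT, Part.bind_eq_bind,
      show (pure 0 : ℕ →. ℕ) n = Part.some 0 from rfl,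
      show (Part.some 0 >>= Nat.Partrec.Code.eval e) = Nat.Partrec.Code.eval e 0 from Part.bind_some 0 _]
  -- key equivalence
  have hkey : ∀ e : Code, (Nat.Partrec.Code.eval e 0).Dom ↔
      ¬ UnderfitsAlways k C (cOf e) d₀ := by
    intro e
    constructor
    · rintro he
      obtain ⟨v, hv⟩ := Part.dom_iff_mem.1 he
      -- pick a stage where all finitely many inputs have converged
      have hstage : ∀ p : LDataset k × Fin (2 ^ (k - 1)), ∃ i : ℕ,
          tgt (Nat.pair (Encodable.encode p.1) (p.2 : ℕ)) ∈
            Nat.Partrec.Code.evaln i (cOf e) (Nat.pair (Encodable.encode p.1) (p.2 : ℕ)) := by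
        intro p
        refine Nat.Partrec.Code.evaln_complete.1 ?_
        rw [heval e v hv]
        exact Part.mem_some _
      choose st hst using hstage
      set i : ℕ := Finset.univ.sup st with hi
      have hmodel : modelOf k (cOf e) i = Amodel k := by
        funext d x
        have := Nat.Partrec.Code.evaln_mono
          (Finset.le_sup (f := st) (Finset.mem_univ (d, x))) (hst (d, x))
        have heq : Nat.Partrec.Code.evaln i (cOf e) (Nat.pair (Encodable.encode d) (x : ℕ)) =
            some (tgt (Nat.pair (Encodable.encode d) (x : ℕ))) := this
        simp [modelOf, Amodel, heq]
      intro hU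
      have := hU i
      rw [hmodel, transfer_inj k (Amodel k) d₀ (Amodel_injective k hk)] at this
      exact absurd this (not_lt.2 (hC d₀).2)
    · intro hU
      by_contra he
      apply hU
      intro i
      have hmodel : modelOf k (cOf e) i = fun _ _ => false := by
        funext d x
        have hnone : Nat.Partrec.Code.evaln i (cOf e)
            (Nat.pair (Encodable.encode d) (x : ℕ)) = none := by
          rw [Option.eq_none_iff_forall_not_mem]
          intro a ha
          have := Nat.Partrec.Code.evaln_sound ha
          rw [hevalnone e he] at this
          exact Part.notMem_none a this
        simp [modelOf, hnone]
      rw [hmodel, transfer_const k hk.le _ d₀ (by intro _; rfl)]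
      exact (hC d₀).1
  -- decide the halting problem
  obtain ⟨f, hf, hpf⟩ := ComputablePred.computable_iff.1 hP
  have hcOfcomp : Computable cOf := by
    have : Primrec cOf :=
      Nat.Partrec.Code.primrec₂_comp.comp (Primrec.const T)
        (Nat.Partrec.Code.primrec₂_pair.comp
          (Nat.Partrec.Code.primrec₂_comp.comp Primrec.id
            (Primrec.const (Nat.Partrec.Code.const 0)))
          (Primrec.const Nat.Partrec.Code.id))
    exact this.to_comp
  have hg : Computable fun e : Code => !(f (cOf e, d₀)) :=
    Primrec.not.to_comp.comp (hf.comp (hcOfcomp.pair (Computable.const d₀)))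
  apply ComputablePred.halting_problem 0
  refine ComputablePred.computable_iff.2 ⟨_, hg, ?_⟩
  funext e
  have hPe : UnderfitsAlways k C (cOf e) d₀ ↔ f (cOf e, d₀) = true :=
    iff_of_eq (congrFun hpf (cOf e, d₀))
  have : (Nat.Partrec.Code.eval e 0).Dom ↔ (!(f (cOf e, d₀)) : Prop) := by
    rw [hkey e]
    cases hfe : f (cOf e, d₀) <;> simp [hPe, hfe]
  exact propext this
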